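/- arXiv:0905.4813 — 7 statements merged into one kernel-verified Lean document; each statement's English description precedes it below -/
import Mathlib

section
/- For every continuous function f : A^ω → B (where A^ω carries the product topology of the discrete space A, and B is discrete), there exists a well-founded tree t : T_A B such that for every stream α : A^ω, the first component of eat t α equals f α. -/
universe u

/-- The initial algebra `T_A B = μX. B + X^A`: wellfounded trees branching over `A`
with leaves labelled in `B`. -/
inductive T (A : Type u) (B : Type u) : Type u
  | Ret : B → T A B
  | Rd : (A → T A B) → T A B

namespace StreamProc

/-- `eat (Ret b) α = (b, α)`, `eat (Rd φ) (a ∷ α) = eat (φ a) α`. -/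
def eat {A B : Type u} : T A B → Stream' A → B × Stream' A
  | .Ret b, α => (b, α)
  | .Rd φ, α => eat (φ α.head) α.tail

/-- `β` and `α` agree on their first `n` entries. -/
def Agree {A : Type u} (n : ℕ) (α β : Stream' A) : Prop :=
  ∀ i < n, α.get i = β.get i

/-- continuity of a discrete-valued function on streams (product topology of
the discrete topology, expressed concretely via prefixes). -/
def ContD {A B : Type u} (f : Stream' A → B) : Prop :=
  ∀ α, ∃ n, ∀ β, Agree n α β → f β = f α

/-- continuity of a stream-valued function on streams. -/
def ContS {A B : Type u} (f : Stream' A → Stream' B) : Prop :=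
  ∀ α n, ∃ m, ∀ β, Agree m α β → Agree n (f α) (f β)

/-- structural recursion (fold) on `T A B`. -/
def tfold {A B C : Type u} (r : B → C) (g : (A → C) → C) : T A B → C
  | .Ret b => r b
  | .Rd φ => g fun a => tfold r g (φ a)

/-- bind of the free (tree) monad `T_A`: grafting at leaves. -/
def tbind {A B C : Type u} : T A B → (B → T A C) → T A C
  | .Ret b, f => f b
  | .Rd φ, f => .Rd fun a => tbind (φ a) f

/-- bind of the state monad `M_A B = A^ω → B × A^ω`. -/
def mbind {A B C : Type u} (m : Stream' A → B × Stream' A)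
    (f : B → Stream' A → C × Stream' A) : Stream' A → C × Stream' A :=
  fun α => f (m α).1 (m α).2

/-- the type of leaf positions of a tree. -/
def LeafPos {A B : Type u} : T A B → Type u
  | .Ret _ => PUnit
  | .Rd φ => Σ a, LeafPos (φ a)

/-- the polynomial functor whose extension is `X ↦ T A (B × X)`. -/
def PF (A B : Type u) : PFunctor.{u} := ⟨T A B, LeafPos⟩

/-- `P_A B = νX. T_A (B × X)`, realised as an M-type. -/
def P (A B : Type u) : Type u := (PF A B).M

/-- repack a shape and leaf-labelling as a tree with decorated leaves. -/
def decorate {A B X : Type u} : (t : T A B) → (LeafPos t → X) → T A (B × X)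
  | .Ret b, f => .Ret (b, f PUnit.unit)
  | .Rd φ, f => .Rd fun a => decorate (φ a) fun l => f ⟨a, l⟩

/-- split a leaf-decorated tree into a shape and a leaf-labelling. -/
def splitT {A B X : Type u} : T A (B × X) → Σ t : T A B, LeafPos t → X
  | .Ret bx => ⟨.Ret bx.1, fun _ => bx.2⟩
  | .Rd φ => ⟨.Rd fun a => (splitT (φ a)).1, fun l => (splitT (φ l.1)).2 l.2⟩

/-- the structure map `out : P_A B → T_A (B × P_A B)` of the final coalgebra. -/
def Pout {A B : Type u} (p : P A B) : T A (B × P A B) :=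
  decorate (PFunctor.M.dest p).1 (PFunctor.M.dest p).2

/-- corecursion (unfold) into the final coalgebra `P_A B`. -/
def Punfold {A B X : Type u} (c : X → T A (B × X)) : X → P A B :=
  PFunctor.M.corec fun x => splitT (c x)

/-- `eat∞ : P_A B → A^ω → B^ω`: if `eat (out p) α = ((b, p'), α')` then
`eat∞ p α = b ∷ eat∞ p' α'`. -/
def eatInf {A B : Type u} (p : P A B) (α : Stream' A) : Stream' B :=
  Stream'.corec (fun s : P A B × Stream' A => (eat (Pout s.1) s.2).1.1)
    (fun s => ((eat (Pout s.1) s.2).1.2, (eat (Pout s.1) s.2).2)) (p, α)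

/-- the `fast-forward` map `ρ`. -/
def rho {A B C : Type u} : T A B → (Stream' A → C) → T A (B × (Stream' A → C))
  | .Ret b, f => .Ret (b, f)
  | .Rd φ, f => .Rd fun a => rho (φ a) fun α => f (Stream'.cons a α)

/-- `rep∞ = unfold (ρ ∘ τ)` where `τ f = (rep (head ∘ f), tail ∘ f)`. -/
def repInf {A B : Type u} (rep : (Stream' A → B) → T A B) :
    (Stream' A → Stream' B) → P A B :=
  Punfold fun f => rho (rep fun α => (f α).head) fun α => (f α).tail

/-- the carrier of the composition coalgebras. -/
def S' (A B C : Type u) : Type u := T B (C × P B C) × T A (B × P A B)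

/-- the `lazy' composition coalgebra `χ`, as a nested structural recursion
(outer fold on the postponent, inner fold on the preponent). -/
def chi {A B C : Type u} : T B (C × P B C) → T A (B × P A B) → T A (C × S' A B C) :=
  tfold
    (fun cp u => .Ret (cp.1, (Pout cp.2, u)))
    (fun f => tfold (fun bq => f bq.1 (Pout bq.2)) .Rd)

/-- the `greedy' composition coalgebra `χ'`. -/
def chi' {A B C : Type u} : T B (C × P B C) → T A (B × P A B) → T A (C × S' A B C) :=
  tfold
    (fun cp => tfold (fun bq => .Ret (cp.1, (Pout cp.2, .Ret bq))) .Rd)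
    (fun f => tfold (fun bq => f bq.1 (Pout bq.2)) .Rd)

/-- lazy composition on representatives (tree level). -/
def otimesT {A B C : Type u} (t : T B (C × P B C)) (u : T A (B × P A B)) : P A C :=
  Punfold (fun s : S' A B C => chi s.1 s.2) (t, u)

/-- lazy composition `⊗ : P_B C × P_A B → P_A C`. -/
def otimes {A B C : Type u} (p : P B C) (q : P A B) : P A C :=
  otimesT (Pout p) (Pout q)

/-- greedy composition on representatives (tree level). -/
def otimesT' {A B C : Type u} (t : T B (C × P B C)) (u : T A (B × P A B)) : P A C :=
  Punfold (fun s : S' A B C => chi' s.1 s.2) (t, u)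

/-- greedy composition `⊗' : P_B C × P_A B → P_A C`. -/
def otimes' {A B C : Type u} (p : P B C) (q : P A B) : P A C :=
  otimesT' (Pout p) (Pout q)

end StreamProc

namespace StreamProc

section Aux

variable {A B : Type u} (f : Stream' A → B)

/-- `f` is decided after reading the finite prefix `s`. -/
def Dcd (s : List A) : Prop := ∃ b, ∀ γ : Stream' A, f (Stream'.appendStream' s γ) = b

/-- one-step extension of undecided prefixes. -/
def RR (t s : List A) : Prop := (∃ a, t = s ++ [a]) ∧ ¬ Dcd f s

lemma acc_of_dcd {s : List A} (h : Dcd f s) : Acc (RR f) s :=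
  Acc.intro s (fun _ ht => absurd h ht.2)

lemma agree_append (L : List A) (γ δ : Stream' A) :
    Agree L.length (Stream'.appendStream' L γ) (Stream'.appendStream' L δ) := by
  induction L with
  | nil => intro i hi; simp at hi
  | cons a L ih =>
    intro i hi
    rw [Stream'.cons_append_stream, Stream'.cons_append_stream]
    cases i with
    | zero => simp [Stream'.get_zero_cons]
    | succ j =>
      rw [Stream'.get_succ_cons, Stream'.get_succ_cons]
      exact ih j (by simpa using hi)

lemma acc_nil (hf : ∀ α, ∃ n, ∀ β, Agree n α β → f β = f α) : Acc (RR f) [] := by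
  by_contra h0
  -- one-step descent
  have step : ∀ s : List A, ¬ Acc (RR f) s → ∃ a : A, ¬ Acc (RR f) (s ++ [a]) := by
    intro s hs
    by_contra hstep
    push_neg at hstep
    exact hs (Acc.intro s (fun t ht => by obtain ⟨⟨a, rfl⟩, _⟩ := ht; exact hstep a))
  -- iterate the descent from []
  let F : ℕ → {s : List A // ¬ Acc (RR f) s} := fun n =>
    Nat.rec ⟨[], h0⟩
      (fun _ p => ⟨p.1 ++ [Classical.choose (step p.1 p.2)],
        Classical.choose_spec (step p.1 p.2)⟩) n
  have hF : ∀ n, (F (n + 1)).1 = (F n).1 ++ [Classical.choose (step (F n).1 (F n).2)] :=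
    fun n => rfl
  let α : Stream' A := fun n => Classical.choose (step (F n).1 (F n).2)
  have hFn : ∀ n, (F n).1 = α.take n := by
    intro n
    induction n with
    | zero => rfl
    | succ n ih =>
      rw [hF n, Stream'.take_succ' n]
      exact congrArg (fun l => l ++ [α.get n]) ih
  -- continuity at α gives a decided prefix, contradiction
  obtain ⟨n, hn⟩ := hf α
  have hlen : (α.take n).length = n := Stream'.length_take n α
  have hdcd : Dcd f ((F n).1) := by
    refine ⟨f α, fun γ => ?_⟩
    rw [hFn n]
    apply hn
    intro i hi
    conv_lhs => rw [← Stream'.append_take_drop n α]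
    have := agree_append (α.take n) (α.drop n) γ
    rw [hlen] at this
    exact this i hi
  exact (F n).2 (acc_of_dcd f hdcd)

lemma main (hf : ∀ α, ∃ n, ∀ β, Agree n α β → f β = f α) :
    ∀ s : List A, Acc (RR f) s →
      ∃ t : T A B, ∀ α, (eat t α).1 = f (Stream'.appendStream' s α) := by
  intro s hs
  induction hs with
  | intro s _ ih =>
    by_cases hd : Dcd f s
    · obtain ⟨b, hb⟩ := hd
      exact ⟨.Ret b, fun α => (hb α).symm⟩
    · choose φ hφ using fun a : A => ih (s ++ [a]) ⟨⟨a, rfl⟩, hd⟩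
      refine ⟨.Rd φ, fun α => ?_⟩
      show (eat (φ α.head) α.tail).1 = _
      rw [hφ α.head α.tail, Stream'.append_append_stream,
        Stream'.cons_append_stream, Stream'.nil_append_stream, Stream'.eta]

end Aux

/-- Every continuous `f : A^ω → B` (discrete `A`, `B`) is represented
by some wellfounded tree `t : T A B`. -/
theorem stmt0 {A B : Type u} (f : Stream' A → B)
    (hf : ∀ α, ∃ n, ∀ β, Agree n α β → f β = f α) :
    ∃ t : T A B, ∀ α, (eat t α).1 = f α := by
  obtain ⟨t, ht⟩ := main f hf [] (acc_nil f hf)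
  exact ⟨t, fun α => by rw [ht α, Stream'.nil_append_stream]⟩

end StreamProc
end

section
/- If a function f : A^ω → B has no representative in T_A B (i.e., there is no t with fst ∘ eat t = f), then assuming dependent choice there exists a stream α : A^ω such that f is not constant on any neighbourhood of α, hence f is not continuous at α. (Classical completeness argument.) -/
universe u

namespace StreamProc
/-- `g` has no representative. -/
def NoRep {A B : Type u} (g : Stream' A → B) : Prop :=
  ¬ ∃ t : T A B, ∀ α, (eat t α).1 = g α

lemma norep_cons {A B : Type u} {g : Stream' A → B} (h : NoRep g) :
    ∃ a, NoRep (fun β => g (Stream'.cons a β)) := by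
  by_contra hc
  push_neg at hc
  simp only [NoRep, not_not] at hc
  choose t ht using hc
  refine h ⟨.Rd t, fun α => ?_⟩
  have := ht α.head α.tail
  simpa [eat, Stream'.eta] using this

lemma norep_ne {A B : Type u} {g : Stream' A → B} (h : NoRep g) (γ : Stream' A) :
    ∃ β, g β ≠ g γ := by
  by_contra hc
  push_neg at hc
  exact h ⟨.Ret (g γ), fun α => by simpa [eat] using (hc α).symm⟩

noncomputable def pick {A B : Type u} {g : Stream' A → B} (h : NoRep g) : A :=
  (norep_cons h).choose

lemma next {A B : Type u} {g : Stream' A → B} (h : NoRep g) :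
    NoRep (fun β => g (Stream'.cons (pick h) β)) :=
  (norep_cons h).choose_spec

noncomputable def strF {A B : Type u} : (g : Stream' A → B) → NoRep g → ℕ → A
  | _, h, 0 => pick h
  | _, h, n + 1 => strF _ (next h) n

lemma strF_cons {A B : Type u} (g : Stream' A → B) (h : NoRep g) :
    (strF g h : Stream' A) = Stream'.cons (pick h) (strF _ (next h)) := by
  funext n
  cases n <;> rfl

lemma main_s4 {A B : Type u} (n : ℕ) : ∀ (g : Stream' A → B) (h : NoRep g),
    ∃ β, Agree n (strF g h) β ∧ g β ≠ g (strF g h) := by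
  induction n with
  | zero =>
    intro g h
    obtain ⟨β, hβ⟩ := norep_ne h (strF g h)
    exact ⟨β, fun i hi => by omega, hβ⟩
  | succ n ih =>
    intro g h
    obtain ⟨β', h1, h2⟩ := ih _ (next h)
    refine ⟨Stream'.cons (pick h) β', ?_, ?_⟩
    · intro i hi
      rw [strF_cons]
      cases i with
      | zero => rfl
      | succ i => exact h1 i (by omega)
    · rw [strF_cons]
      exact h2

/-- Classical completeness argument: if `f` has no representative then there is a
stream `α` such that `f` is not constant on any neighbourhood of `α`, hence `f` is
not continuous at `α`. -/
theorem stmt4 {A B : Type u} (f : Stream' A → B)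
    (h : ¬ ∃ t : T A B, ∀ α, (eat t α).1 = f α) :
    ∃ α : Stream' A,
      (∀ n, ∃ β, Agree n α β ∧ f β ≠ f α) ∧
      ¬ (∃ n, ∀ β, Agree n α β → f β = f α) := by
  have h' : NoRep f := h
  refine ⟨strF f h', fun n => main_s4 n f h', ?_⟩
  rintro ⟨n, hn⟩
  obtain ⟨β, h1, h2⟩ := main_s4 n f h'
  exact h2 (hn β h1)

end StreamProc
end

section
/- For every p : P_A B, the function eat∞ p : A^ω → B^ω is continuous: for every α and every n there exists m such that all streams agreeing with α on their first m entries are mapped by eat∞ p to streams agreeing with eat∞ p α on their first n entries. -/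
universe u

/-! `eat` consumes only a finite prefix of its input and hands back the untouched suffix, so each
output symbol of `eat∞ p` depends on a finite prefix of the input; induction on the length of
the output prefix then gives continuity. -/

namespace StreamProc

section Agree

variable {A : Type u} {m n : ℕ} {α β : Stream' A}

theorem Agree.mono (h : Agree m α β) (hnm : n ≤ m) : Agree n α β :=
  fun i hi => h i (lt_of_lt_of_le hi hnm)

theorem Agree.drop (h : Agree (m + n) α β) : Agree n (α.drop m) (β.drop m) := fun i hi => by
  simpa only [Stream'.get_drop, Nat.add_comm i m] using h (m + i) (by omega)

theorem agree_succ_iff : Agree (n + 1) α β ↔ α.head = β.head ∧ Agree n α.tail β.tail := by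
  constructor
  · intro h
    exact ⟨h 0 n.succ_pos, fun i hi => h (i + 1) (Nat.succ_lt_succ hi)⟩
  · rintro ⟨hhead, htail⟩ (_ | i) hi
    · exact hhead
    · exact htail i (Nat.lt_of_succ_lt_succ hi)

theorem agree_cons_iff {a b : A} :
    Agree (n + 1) (Stream'.cons a α) (Stream'.cons b β) ↔ a = b ∧ Agree n α β := by
  simp only [agree_succ_iff, Stream'.head_cons, Stream'.tail_cons]

end Agree

variable {A B : Type u}

theorem exists_eat_eq_of_agree (t : T A B) (α : Stream' A) :
    ∃ m, ∀ β, Agree m α β → eat t β = ((eat t α).1, β.drop m) := by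
  induction t generalizing α with
  | Ret b => exact ⟨0, fun β _ => rfl⟩
  | Rd φ ih =>
    obtain ⟨m, hm⟩ := ih α.head α.tail
    refine ⟨m + 1, fun β hβ => ?_⟩
    obtain ⟨hhead, htail⟩ := agree_succ_iff.1 hβ
    simp only [eat, ← hhead, hm β.tail htail, Stream'.drop_succ]

theorem eatInf_eq_cons (p : P A B) (α : Stream' A) :
    eatInf p α = Stream'.cons (eat (Pout p) α).1.1
      (eatInf (eat (Pout p) α).1.2 (eat (Pout p) α).2) := by
  unfold eatInf
  rw [Stream'.corec_eq]

theorem exists_agree_eatInf (n : ℕ) (p : P A B) (α : Stream' A) :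
    ∃ m, ∀ β, Agree m α β → Agree n (eatInf p α) (eatInf p β) := by
  induction n generalizing p α with
  | zero => exact ⟨0, fun _ _ _ hi => absurd hi (Nat.not_lt_zero _)⟩
  | succ n ih =>
    obtain ⟨m₀, h₀⟩ := exists_eat_eq_of_agree (Pout p) α
    have hα : (eat (Pout p) α).2 = α.drop m₀ := congrArg Prod.snd (h₀ α fun _ _ => rfl)
    obtain ⟨m₁, h₁⟩ := ih (eat (Pout p) α).1.2 (α.drop m₀)
    refine ⟨m₀ + m₁, fun β hβ => ?_⟩
    rw [eatInf_eq_cons p α, eatInf_eq_cons p β, h₀ β (hβ.mono (Nat.le_add_right m₀ m₁)), hα]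
    exact agree_cons_iff.2 ⟨rfl, h₁ _ hβ.drop⟩

/-- `eat∞ p` is continuous: any finite amount of the output is determined by a
finite amount of the input. -/
theorem stmt8 {A B : Type u} (p : P A B) :
    ∀ (α : Stream' A) (n : ℕ), ∃ m, ∀ β, Agree m α β →
      Agree n (eatInf p α) (eatInf p β) :=
  fun α n => exists_agree_eatInf n p α

end StreamProc
end

section
/- The 'fast-forward' function ρ : T_A B × (A^ω → C) → T_A (B × (A^ω → C)), defined by ρ (Ret b, f) = Ret (b, f) and ρ (Rd φ, f) = Rd (λa. ρ (φ a, f ∘ (a ∷ ·))), is a bijection. -/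
universe u

namespace StreamProc

def rinv {A B C : Type u} : T A (B × (Stream' A → C)) → T A B × (Stream' A → C)
  | .Ret bf => (.Ret bf.1, bf.2)
  | .Rd ψ => (.Rd fun a => (rinv (ψ a)).1, fun α => (rinv (ψ α.head)).2 α.tail)

theorem rho_left {A B C : Type u} : ∀ (t : T A B) (f : Stream' A → C), rinv (rho t f) = (t, f)
  | .Ret b, f => rfl
  | .Rd φ, f => by
      simp only [rho, rinv]
      rw [Prod.mk.injEq]
      constructor
      · congr 1; funext a; rw [rho_left (φ a)]
      · funext α; rw [rho_left (φ α.head)]; exact congrArg f (Stream'.eta α)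

theorem rho_right {A B C : Type u} : ∀ (s : T A (B × (Stream' A → C))), rho (rinv s).1 (rinv s).2 = s
  | .Ret bf => rfl
  | .Rd ψ => by
      simp only [rinv, rho]
      congr 1; funext a
      have : (fun α => (rinv (ψ (Stream'.cons a α).head)).2 (Stream'.cons a α).tail)
          = (rinv (ψ a)).2 := by funext α; simp
      rw [this, rho_right (ψ a)]

/-- The fast-forward map `ρ` is a bijection. -/
theorem stmt9 {A B C : Type u} :
    Function.Bijective (fun x : T A B × (Stream' A → C) => rho x.1 x.2) := by
  refine Function.bijective_iff_has_inverse.2 ⟨rinv, ?_, ?_⟩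
  · intro x; exact rho_left x.1 x.2
  · intro s; exact rho_right s

end StreamProc
end

section
/- ρ preserves the eating behaviour on the first coordinate: for all t : T_A B, f : A^ω → C, and α : A^ω, fst (fst (eat (ρ (t, f)) α)) = fst (eat t α), and the residual streams agree: snd (eat (ρ (t, f)) α) = snd (eat t α). -/
universe u

namespace StreamProc
/-- `ρ` preserves the eating behaviour: same first coordinate at the leaf and
same residual stream. -/
theorem stmt10 {A B C : Type u} (t : T A B) (f : Stream' A → C) (α : Stream' A) :
    (eat (rho t f) α).1.1 = (eat t α).1 ∧
    (eat (rho t f) α).2 = (eat t α).2 := by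
  induction t generalizing f α with
  | Ret b => exact ⟨rfl, rfl⟩
  | Rd φ ih => exact ih α.head _ α.tail

end StreamProc
end

section
/- ρ correctly fast-forwards the function component: for all t : T_A B, f : A^ω → C, α : A^ω, if eat (ρ (t,f)) α = ((b, g), α') then g α' = f α; i.e., the second component of the leaf data applied to the residual stream equals f applied to the original stream. -/
universe u

namespace StreamProc
/-- `ρ` correctly fast-forwards the function component: the function stored at the
leaf, applied to the residual stream, equals `f` applied to the original stream. -/
theorem stmt11 {A B C : Type u} (t : T A B) (f : Stream' A → C) (α : Stream' A)
    (b : B) (g : Stream' A → C) (α' : Stream' A)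
    (h : eat (rho t f) α = ((b, g), α')) :
    g α' = f α := by
  induction t generalizing f α with
  | Ret b' =>
    simp [rho, eat] at h
    obtain ⟨⟨h1, h2⟩, h3⟩ := h
    rw [← h2, ← h3]
  | Rd φ ih =>
    simp only [rho, eat] at h
    have := ih α.head _ _ h
    rwa [Stream'.eta] at this

end StreamProc
end

section
/- head agreement for rep∞: under the assumption that rep represents every continuous discrete-valued function, for every continuous f : A^ω → B^ω and α : A^ω, head (eat∞ (rep∞ f) α) = head (f α). -/
universe u

namespace StreamProc

lemma splitT_rho_fst {A B C : Type u} (t : T A B) (h : Stream' A → C) :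
    (splitT (rho t h)).1 = t := by
  induction t generalizing h with
  | Ret b => rfl
  | Rd φ ih => simp [rho, splitT]; funext a; exact ih a _

lemma eat_decorate_fst {A B X : Type u} (t : T A B) (g : LeafPos t → X)
    (α : Stream' A) : (eat (decorate t g) α).1.1 = (eat t α).1 := by
  induction t generalizing α with
  | Ret b => rfl
  | Rd φ ih => exact ih _ _ _

lemma head_eatInf {A B : Type u} (p : P A B) (α : Stream' A) :
    (eatInf p α).head = (eat (Pout p) α).1.1 := rfl

lemma Pout_Punfold {A B X : Type u} (c : X → T A (B × X)) (x : X) :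
    Pout (Punfold c x) = decorate (splitT (c x)).1
      (fun l => Punfold c ((splitT (c x)).2 l)) := by
  simp [Pout, Punfold, PFunctor.M.dest_corec]
  rfl

/-- Head agreement for `rep∞`: assuming `rep` represents every continuous
discrete-valued function, the head of `eat∞ (rep∞ f) α` equals the head of `f α`. -/
theorem stmt13 {A B : Type u} (rep : (Stream' A → B) → T A B)
    (hrep : ∀ g : Stream' A → B, ContD g → ∀ α, (eat (rep g) α).1 = g α)
    (f : Stream' A → Stream' B) (hf : ContS f) (α : Stream' A) :
    (eatInf (repInf rep f) α).head = (f α).head := by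
  have hg : ContD (fun α => (f α).head) := by
    intro β
    obtain ⟨m, hm⟩ := hf β 1
    exact ⟨m, fun γ hγ => (hm γ hγ 0 (by norm_num)).symm⟩
  rw [head_eatInf, repInf, Pout_Punfold, eat_decorate_fst, splitT_rho_fst]
  exact hrep _ hg α

end StreamProc
end
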